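/- (The core of a matched pair of 2-representations is a Lie algebroid.) Given a matched pair of 2-representations of the Lie–Rinehart algebras A and B on the module C, the triple (C, ρ_C, [·,·]_C), where ρ_C := ρ_A ∘ ∂_A and [c₁,c₂]_C := ∇^{AC}_{∂_A c₁}c₂ − ∇^{BC}_{∂_B c₂}c₁, is a Lie–Rinehart algebra over R: the bracket [·,·]_C is ℝ-bilinear and antisymmetric, satisfies the Jacobi identity, satisfies the Leibniz rule [c₁, f•c₂]_C = f•[c₁,c₂]_C + ρ_C(c₁)(f)•c₂, and ρ_C : C → Der(R) is R-linear and preserves brackets. -/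

import Mathlib

/-- A Lie–Rinehart algebra over a commutative `ℝ`-algebra `R`. -/
structure LieRinehart (R : Type*) [CommRing R] [Algebra ℝ R]
    (L : Type*) [AddCommGroup L] [Module R L] where
  bracket : L → L → L
  bracket_add_left : ∀ x y z : L, bracket (x + y) z = bracket x z + bracket y z
  bracket_add_right : ∀ x y z : L, bracket x (y + z) = bracket x y + bracket x z
  bracket_real_left : ∀ (r : ℝ) (x y : L),
    bracket ((algebraMap ℝ R r) • x) y = (algebraMap ℝ R r) • bracket x y
  bracket_real_right : ∀ (r : ℝ) (x y : L),
    bracket x ((algebraMap ℝ R r) • y) = (algebraMap ℝ R r) • bracket x y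
  bracket_antisymm : ∀ x y : L, bracket x y = - bracket y x
  bracket_jacobi : ∀ x y z : L,
    bracket x (bracket y z) = bracket (bracket x y) z + bracket y (bracket x z)
  anchor : L →ₗ[R] Derivation ℝ R R
  anchor_bracket : ∀ x y : L, anchor (bracket x y) = ⁅anchor x, anchor y⁆
  leibniz : ∀ (f : R) (x y : L),
    bracket x (f • y) = f • bracket x y + (anchor x f) • y

/-- An `L`-connection on an `R`-module `E`, for `L` a Lie–Rinehart algebra. -/
structure LRConnection (R : Type*) [CommRing R] [Algebra ℝ R]
    {A : Type*} [AddCommGroup A] [Module R A]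
    (LA : LieRinehart R A)
    (E : Type*) [AddCommGroup E] [Module R E] where
  conn : A → E → E
  conn_add_left : ∀ (x y : A) (e : E), conn (x + y) e = conn x e + conn y e
  conn_add_right : ∀ (x : A) (e e' : E), conn x (e + e') = conn x e + conn x e'
  conn_smul_left : ∀ (f : R) (x : A) (e : E), conn (f • x) e = f • conn x e
  conn_leibniz : ∀ (f : R) (x : A) (e : E),
    conn x (f • e) = f • conn x e + (LA.anchor x f) • e

/-- A matched pair of 2-representations of the Lie–Rinehart algebras `A` and `B`
on the `R`-module `C`. -/
structure MatchedPair (R : Type*) [CommRing R] [Algebra ℝ R]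
    (A B C : Type*) [AddCommGroup A] [Module R A] [AddCommGroup B] [Module R B]
    [AddCommGroup C] [Module R C] where
  la : LieRinehart R A
  lb : LieRinehart R B
  dA : C →ₗ[R] A
  dB : C →ₗ[R] B
  nAB : LRConnection R la B
  nAC : LRConnection R la C
  nBA : LRConnection R lb A
  nBC : LRConnection R lb C
  RA : A → A → B →ₗ[R] C
  RB : B → B → A →ₗ[R] C
  RA_add_left : ∀ a₁ a₂ a₃ : A, RA (a₁ + a₂) a₃ = RA a₁ a₃ + RA a₂ a₃
  RA_add_right : ∀ a₁ a₂ a₃ : A, RA a₁ (a₂ + a₃) = RA a₁ a₂ + RA a₁ a₃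
  RA_smul_left : ∀ (f : R) (a₁ a₂ : A), RA (f • a₁) a₂ = f • RA a₁ a₂
  RA_smul_right : ∀ (f : R) (a₁ a₂ : A), RA a₁ (f • a₂) = f • RA a₁ a₂
  RA_alt : ∀ a : A, RA a a = 0
  RB_add_left : ∀ b₁ b₂ b₃ : B, RB (b₁ + b₂) b₃ = RB b₁ b₃ + RB b₂ b₃
  RB_add_right : ∀ b₁ b₂ b₃ : B, RB b₁ (b₂ + b₃) = RB b₁ b₂ + RB b₁ b₃
  RB_smul_left : ∀ (f : R) (b₁ b₂ : B), RB (f • b₁) b₂ = f • RB b₁ b₂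
  RB_smul_right : ∀ (f : R) (b₁ b₂ : B), RB b₁ (f • b₂) = f • RB b₁ b₂
  RB_alt : ∀ b : B, RB b b = 0
  /- `(∇^{AB}, ∇^{AC}, R_A)` is a 2-representation of `A` on `∂_B : C → B`. -/
  repA_comm : ∀ (a : A) (c : C), dB (nAC.conn a c) = nAB.conn a (dB c)
  repA_curvC : ∀ (a₁ a₂ : A) (c : C),
    nAC.conn a₁ (nAC.conn a₂ c) - nAC.conn a₂ (nAC.conn a₁ c)
      - nAC.conn (la.bracket a₁ a₂) c = RA a₁ a₂ (dB c)
  repA_curvB : ∀ (a₁ a₂ : A) (b : B),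
    nAB.conn a₁ (nAB.conn a₂ b) - nAB.conn a₂ (nAB.conn a₁ b)
      - nAB.conn (la.bracket a₁ a₂) b = dB (RA a₁ a₂ b)
  repA_dR : ∀ (a₁ a₂ a₃ : A) (b : B),
    nAC.conn a₁ (RA a₂ a₃ b) - RA a₂ a₃ (nAB.conn a₁ b)
    - nAC.conn a₂ (RA a₁ a₃ b) + RA a₁ a₃ (nAB.conn a₂ b)
    + nAC.conn a₃ (RA a₁ a₂ b) - RA a₁ a₂ (nAB.conn a₃ b)
    - RA (la.bracket a₁ a₂) a₃ b + RA (la.bracket a₁ a₃) a₂ b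
    - RA (la.bracket a₂ a₃) a₁ b = 0
  /- `(∇^{BA}, ∇^{BC}, R_B)` is a 2-representation of `B` on `∂_A : C → A`. -/
  repB_comm : ∀ (b : B) (c : C), dA (nBC.conn b c) = nBA.conn b (dA c)
  repB_curvC : ∀ (b₁ b₂ : B) (c : C),
    nBC.conn b₁ (nBC.conn b₂ c) - nBC.conn b₂ (nBC.conn b₁ c)
      - nBC.conn (lb.bracket b₁ b₂) c = RB b₁ b₂ (dA c)
  repB_curvA : ∀ (b₁ b₂ : B) (a : A),
    nBA.conn b₁ (nBA.conn b₂ a) - nBA.conn b₂ (nBA.conn b₁ a)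
      - nBA.conn (lb.bracket b₁ b₂) a = dA (RB b₁ b₂ a)
  repB_dR : ∀ (b₁ b₂ b₃ : B) (a : A),
    nBC.conn b₁ (RB b₂ b₃ a) - RB b₂ b₃ (nBA.conn b₁ a)
    - nBC.conn b₂ (RB b₁ b₃ a) + RB b₁ b₃ (nBA.conn b₂ a)
    + nBC.conn b₃ (RB b₁ b₂ a) - RB b₁ b₂ (nBA.conn b₃ a)
    - RB (lb.bracket b₁ b₂) b₃ a + RB (lb.bracket b₁ b₃) b₂ a
    - RB (lb.bracket b₂ b₃) b₁ a = 0
  /- The matched pair conditions (M1)–(M9). -/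
  M1 : ∀ c : C, la.anchor (dA c) = lb.anchor (dB c)
  M2 : ∀ c₁ c₂ : C,
    nAC.conn (dA c₁) c₂ - nBC.conn (dB c₂) c₁
      = - nAC.conn (dA c₂) c₁ + nBC.conn (dB c₁) c₂
  M3 : ∀ (a : A) (c : C),
    la.bracket a (dA c) = dA (nAC.conn a c) - nBA.conn (dB c) a
  M4 : ∀ (b : B) (c : C),
    lb.bracket b (dB c) = dB (nBC.conn b c) - nAB.conn (dA c) b
  M5 : ∀ (a : A) (b : B),
    ⁅la.anchor a, lb.anchor b⁆ = lb.anchor (nAB.conn a b) - la.anchor (nBA.conn b a)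
  M6 : ∀ (a : A) (b : B) (c : C),
    nBC.conn b (nAC.conn a c) - nAC.conn a (nBC.conn b c)
      - nAC.conn (nBA.conn b a) c + nBC.conn (nAB.conn a b) c
      = RB b (dB c) a - RA a (dA c) b
  M7 : ∀ (a₁ a₂ : A) (b : B),
    dA (RA a₁ a₂ b)
      = - nBA.conn b (la.bracket a₁ a₂)
        + la.bracket (nBA.conn b a₁) a₂ + la.bracket a₁ (nBA.conn b a₂)
        + nBA.conn (nAB.conn a₂ b) a₁ - nBA.conn (nAB.conn a₁ b) a₂
  M8 : ∀ (b₁ b₂ : B) (a : A),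
    dB (RB b₁ b₂ a)
      = - nAB.conn a (lb.bracket b₁ b₂)
        + lb.bracket (nAB.conn a b₁) b₂ + lb.bracket b₁ (nAB.conn a b₂)
        + nAB.conn (nBA.conn b₂ a) b₁ - nAB.conn (nBA.conn b₁ a) b₂
  M9 : ∀ (a₁ a₂ : A) (b₁ b₂ : B),
    nAC.conn a₁ (RB b₁ b₂ a₂) - nAC.conn a₂ (RB b₁ b₂ a₁)
      - RB b₁ b₂ (la.bracket a₁ a₂)
      - RB (nAB.conn a₁ b₁) b₂ a₂ - RB b₁ (nAB.conn a₁ b₂) a₂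
      + RB (nAB.conn a₂ b₁) b₂ a₁ + RB b₁ (nAB.conn a₂ b₂) a₁
    = nBC.conn b₁ (RA a₁ a₂ b₂) - nBC.conn b₂ (RA a₁ a₂ b₁)
      - RA a₁ a₂ (lb.bracket b₁ b₂)
      - RA (nBA.conn b₁ a₁) a₂ b₂ - RA a₁ (nBA.conn b₁ a₂) b₂
      + RA (nBA.conn b₂ a₁) a₂ b₁ + RA a₁ (nBA.conn b₂ a₂) b₁

variable {R : Type*} [CommRing R] [Algebra ℝ R]
variable {A B C : Type*} [AddCommGroup A] [Module R A] [AddCommGroup B] [Module R B]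
  [AddCommGroup C] [Module R C]

/-- The core bracket `[c₁,c₂]_C = ∇^{AC}_{∂_A c₁} c₂ − ∇^{BC}_{∂_B c₂} c₁`. -/
def MatchedPair.coreBracket (MP : MatchedPair R A B C) (c₁ c₂ : C) : C :=
  MP.nAC.conn (MP.dA c₁) c₂ - MP.nBC.conn (MP.dB c₂) c₁

/-- The core anchor `ρ_C = ρ_A ∘ ∂_A`. -/
def MatchedPair.coreAnchor (MP : MatchedPair R A B C) (c : C) : Derivation ℝ R R :=
  MP.la.anchor (MP.dA c)

/-!
The maps `∂_A` and `∂_B` intertwine the core bracket with the brackets of `A` and `B`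
(by (M3), (M4) and `∂_B ∘ ∇^{AC} = ∇^{AB} ∘ ∂_B`, `∂_A ∘ ∇^{BC} = ∇^{BA} ∘ ∂_A`), so the
core anchor `ρ_A ∘ ∂_A` preserves brackets. Antisymmetry is exactly (M2), and bilinearity
and the Leibniz rule are inherited from the connections. For the Jacobi identity one expands
the cyclic sum of double brackets: using (M2) to move terms between `∇^{AC}` and `∇^{BC}`,
what remains are the curvatures of `∇^{AC}` and `∇^{BC}`, equal to `R_A(·,·) ∘ ∂_B` and
`R_B(·,·) ∘ ∂_A`, and (M6), whose curvature terms cancel them.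
-/

namespace LRConnection

variable {LA : LieRinehart R A} {E : Type*} [AddCommGroup E] [Module R E]
  (N : LRConnection R LA E)

lemma conn_zero_right (x : A) : N.conn x (0 : E) = 0 := by
  simpa using N.conn_leibniz 0 x 0

lemma conn_neg_right (x : A) (e : E) : N.conn x (-e) = -N.conn x e := by
  rw [eq_neg_iff_add_eq_zero, ← N.conn_add_right, neg_add_cancel, conn_zero_right]

lemma conn_neg_left (x : A) (e : E) : N.conn (-x) e = -N.conn x e := by
  rw [← neg_one_smul R x, N.conn_smul_left, neg_one_smul]

lemma conn_sub_right (x : A) (e e' : E) : N.conn x (e - e') = N.conn x e - N.conn x e' := by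
  rw [sub_eq_add_neg, N.conn_add_right, N.conn_neg_right, sub_eq_add_neg]

end LRConnection

namespace MatchedPair

variable (MP : MatchedPair R A B C)

lemma RB_apply_swap (b₁ b₂ : B) (a : A) : MP.RB b₁ b₂ a = -MP.RB b₂ b₁ a := by
  have h := congrArg (· a) (MP.RB_alt (b₁ + b₂))
  simp only [MP.RB_add_left, MP.RB_add_right, MP.RB_alt, LinearMap.add_apply,
    LinearMap.zero_apply, zero_add, add_zero] at h
  exact eq_neg_of_add_eq_zero_left h

lemma dA_coreBracket (c₁ c₂ : C) :
    MP.dA (MP.coreBracket c₁ c₂) = MP.la.bracket (MP.dA c₁) (MP.dA c₂) := by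
  rw [coreBracket, map_sub, MP.repB_comm, MP.M3]

lemma dB_coreBracket (c₁ c₂ : C) :
    MP.dB (MP.coreBracket c₁ c₂) = MP.lb.bracket (MP.dB c₁) (MP.dB c₂) := by
  rw [coreBracket, map_sub, MP.repA_comm, MP.lb.bracket_antisymm, MP.M4]
  abel

lemma dB_nBC (b : B) (c : C) :
    MP.dB (MP.nBC.conn b c) = MP.lb.bracket b (MP.dB c) + MP.nAB.conn (MP.dA c) b := by
  rw [MP.M4, sub_add_cancel]

lemma coreBracket_add_left (c₁ c₂ c₃ : C) :
    MP.coreBracket (c₁ + c₂) c₃ = MP.coreBracket c₁ c₃ + MP.coreBracket c₂ c₃ := by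
  simp only [coreBracket, map_add, MP.nAC.conn_add_left, MP.nBC.conn_add_right]
  abel

lemma coreBracket_add_right (c₁ c₂ c₃ : C) :
    MP.coreBracket c₁ (c₂ + c₃) = MP.coreBracket c₁ c₂ + MP.coreBracket c₁ c₃ := by
  simp only [coreBracket, map_add, MP.nAC.conn_add_right, MP.nBC.conn_add_left]
  abel

lemma coreBracket_neg_right (c₁ c₂ : C) :
    MP.coreBracket c₁ (-c₂) = -MP.coreBracket c₁ c₂ := by
  rw [coreBracket, coreBracket, map_neg, MP.nAC.conn_neg_right, MP.nBC.conn_neg_left]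
  abel

lemma coreBracket_smul_right (f : R) (c₁ c₂ : C) :
    MP.coreBracket c₁ (f • c₂) = f • MP.coreBracket c₁ c₂ + MP.coreAnchor c₁ f • c₂ := by
  simp only [coreBracket, coreAnchor, map_smul, MP.nAC.conn_leibniz, MP.nBC.conn_smul_left,
    smul_sub]
  abel

lemma coreBracket_algebraMap_smul_left (r : ℝ) (c₁ c₂ : C) :
    MP.coreBracket (algebraMap ℝ R r • c₁) c₂ = algebraMap ℝ R r • MP.coreBracket c₁ c₂ := by
  simp only [coreBracket, map_smul, MP.nAC.conn_smul_left, MP.nBC.conn_leibniz,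
    Derivation.map_algebraMap, zero_smul, add_zero, smul_sub]

lemma coreBracket_algebraMap_smul_right (r : ℝ) (c₁ c₂ : C) :
    MP.coreBracket c₁ (algebraMap ℝ R r • c₂) = algebraMap ℝ R r • MP.coreBracket c₁ c₂ := by
  rw [coreBracket_smul_right, Derivation.map_algebraMap, zero_smul, add_zero]

lemma coreBracket_antisymm (c₁ c₂ : C) : MP.coreBracket c₁ c₂ = -MP.coreBracket c₂ c₁ := by
  rw [coreBracket, coreBracket, MP.M2]
  abel

lemma coreBracket_coreBracket (c₁ c₂ c₃ : C) :
    MP.coreBracket c₁ (MP.coreBracket c₂ c₃)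
      = MP.nAC.conn (MP.dA c₁) (MP.nAC.conn (MP.dA c₂) c₃)
        - MP.nAC.conn (MP.dA c₁) (MP.nBC.conn (MP.dB c₃) c₂)
        - MP.nBC.conn (MP.lb.bracket (MP.dB c₂) (MP.dB c₃)) c₁ := by
  rw [coreBracket, MP.dB_coreBracket, coreBracket, MP.nAC.conn_sub_right]

lemma coreBracket_cyclic (c₁ c₂ c₃ : C) :
    MP.coreBracket c₁ (MP.coreBracket c₂ c₃) + MP.coreBracket c₂ (MP.coreBracket c₃ c₁)
      + MP.coreBracket c₃ (MP.coreBracket c₁ c₂) = 0 := by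
  rw [coreBracket_coreBracket, coreBracket_coreBracket, coreBracket_coreBracket]
  have M2_conn : MP.nAC.conn (MP.dA c₂) (MP.nAC.conn (MP.dA c₃) c₁)
        - MP.nAC.conn (MP.dA c₂) (MP.nBC.conn (MP.dB c₁) c₃)
      = -MP.nAC.conn (MP.dA c₂) (MP.nAC.conn (MP.dA c₁) c₃)
        + MP.nAC.conn (MP.dA c₂) (MP.nBC.conn (MP.dB c₃) c₁) := by
    have h := congrArg (MP.nAC.conn (MP.dA c₂)) (MP.M2 c₃ c₁)
    rwa [MP.nAC.conn_sub_right, MP.nAC.conn_add_right, MP.nAC.conn_neg_right] at h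
  have M2_coreBracket : MP.nAC.conn (MP.dA c₃) (MP.nAC.conn (MP.dA c₁) c₂)
        - MP.nAC.conn (MP.dA c₃) (MP.nBC.conn (MP.dB c₂) c₁)
        - MP.nBC.conn (MP.lb.bracket (MP.dB c₁) (MP.dB c₂)) c₃
      = -MP.nAC.conn (MP.la.bracket (MP.dA c₁) (MP.dA c₂)) c₃
        + MP.nBC.conn (MP.dB c₃) (MP.nAC.conn (MP.dA c₁) c₂)
        - MP.nBC.conn (MP.dB c₃) (MP.nBC.conn (MP.dB c₂) c₁) := by
    have h := MP.M2 c₃ (MP.coreBracket c₁ c₂)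
    rw [MP.dA_coreBracket, MP.dB_coreBracket, coreBracket, MP.nAC.conn_sub_right,
      MP.nBC.conn_sub_right] at h
    linear_combination (norm := abel) h
  have M2_nBC : MP.nAC.conn (MP.dA c₂) (MP.nBC.conn (MP.dB c₃) c₁)
        - (MP.nBC.conn (MP.lb.bracket (MP.dB c₃) (MP.dB c₁)) c₂
          + MP.nBC.conn (MP.nAB.conn (MP.dA c₁) (MP.dB c₃)) c₂)
      = -MP.nAC.conn (MP.nBA.conn (MP.dB c₃) (MP.dA c₁)) c₂
        + MP.nBC.conn (MP.dB c₂) (MP.nBC.conn (MP.dB c₃) c₁) := by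
    have h := MP.M2 c₂ (MP.nBC.conn (MP.dB c₃) c₁)
    rwa [MP.repB_comm, MP.dB_nBC, MP.nBC.conn_add_left] at h
  linear_combination (norm := abel) M2_conn + M2_coreBracket + M2_nBC
    + MP.repA_curvC (MP.dA c₁) (MP.dA c₂) c₃ + MP.repB_curvC (MP.dB c₂) (MP.dB c₃) c₁
    + MP.M6 (MP.dA c₁) (MP.dB c₃) c₂ + MP.RB_apply_swap (MP.dB c₃) (MP.dB c₂) (MP.dA c₁)

lemma coreBracket_jacobi (c₁ c₂ c₃ : C) :
    MP.coreBracket c₁ (MP.coreBracket c₂ c₃)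
      = MP.coreBracket (MP.coreBracket c₁ c₂) c₃ + MP.coreBracket c₂ (MP.coreBracket c₁ c₃) := by
  rw [MP.coreBracket_antisymm (MP.coreBracket c₁ c₂), MP.coreBracket_antisymm c₁ c₃,
    coreBracket_neg_right]
  linear_combination (norm := abel) MP.coreBracket_cyclic c₁ c₂ c₃

lemma coreAnchor_add (c₁ c₂ : C) :
    MP.coreAnchor (c₁ + c₂) = MP.coreAnchor c₁ + MP.coreAnchor c₂ := by
  simp only [coreAnchor, map_add]

lemma coreAnchor_smul (f : R) (c : C) : MP.coreAnchor (f • c) = f • MP.coreAnchor c := by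
  simp only [coreAnchor, map_smul]

lemma coreAnchor_coreBracket (c₁ c₂ : C) :
    MP.coreAnchor (MP.coreBracket c₁ c₂) = ⁅MP.coreAnchor c₁, MP.coreAnchor c₂⁆ := by
  rw [coreAnchor, dA_coreBracket, MP.la.anchor_bracket]
  rfl

end MatchedPair

/-- the core of a matched pair of 2-representations is a Lie algebroid
(Lie–Rinehart algebra): the core bracket is ℝ-bilinear, antisymmetric, satisfies the
Jacobi identity and the Leibniz rule, and the core anchor is `R`-linear and preserves
brackets. -/
theorem core_of_matched_pair_is_LieRinehart (MP : MatchedPair R A B C) :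
    (∀ c₁ c₂ c₃ : C,
      MP.coreBracket (c₁ + c₂) c₃ = MP.coreBracket c₁ c₃ + MP.coreBracket c₂ c₃) ∧
    (∀ c₁ c₂ c₃ : C,
      MP.coreBracket c₁ (c₂ + c₃) = MP.coreBracket c₁ c₂ + MP.coreBracket c₁ c₃) ∧
    (∀ (r : ℝ) (c₁ c₂ : C),
      MP.coreBracket ((algebraMap ℝ R r) • c₁) c₂
        = (algebraMap ℝ R r) • MP.coreBracket c₁ c₂) ∧
    (∀ (r : ℝ) (c₁ c₂ : C),
      MP.coreBracket c₁ ((algebraMap ℝ R r) • c₂)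
        = (algebraMap ℝ R r) • MP.coreBracket c₁ c₂) ∧
    (∀ c₁ c₂ : C, MP.coreBracket c₁ c₂ = - MP.coreBracket c₂ c₁) ∧
    (∀ c₁ c₂ c₃ : C,
      MP.coreBracket c₁ (MP.coreBracket c₂ c₃)
        = MP.coreBracket (MP.coreBracket c₁ c₂) c₃
          + MP.coreBracket c₂ (MP.coreBracket c₁ c₃)) ∧
    (∀ (f : R) (c₁ c₂ : C),
      MP.coreBracket c₁ (f • c₂)
        = f • MP.coreBracket c₁ c₂ + (MP.coreAnchor c₁ f) • c₂) ∧
    (∀ c₁ c₂ : C, MP.coreAnchor (c₁ + c₂) = MP.coreAnchor c₁ + MP.coreAnchor c₂) ∧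
    (∀ (f : R) (c : C), MP.coreAnchor (f • c) = f • MP.coreAnchor c) ∧
    (∀ c₁ c₂ : C,
      MP.coreAnchor (MP.coreBracket c₁ c₂) = ⁅MP.coreAnchor c₁, MP.coreAnchor c₂⁆) := by
  exact ⟨MP.coreBracket_add_left, MP.coreBracket_add_right,
    MP.coreBracket_algebraMap_smul_left, MP.coreBracket_algebraMap_smul_right,
    MP.coreBracket_antisymm, MP.coreBracket_jacobi, MP.coreBracket_smul_right,
    MP.coreAnchor_add, MP.coreAnchor_smul, MP.coreAnchor_coreBracket⟩
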